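/- Let d = 2 and set ε_0 = (5π/(44√2))². Then for every 0 < ε < ε_0, no minimizer of the energy E_ε over probability measures on ℝ² is radially symmetric. -/

import Mathlib

open MeasureTheory Metric Filter Set
open scoped ENNReal NNReal Topology

noncomputable section

/-- The part of an extended-real number as an `ℝ≥0∞` value: negatives (and `⊥`)
are sent to `0`, and `⊤` to `⊤`. -/
def EReal.toENNReal' (x : EReal) : ℝ≥0∞ := if x = ⊤ then ⊤ else ENNReal.ofReal x.toReal

/-- Integral of an `(ℝ ∪ {±∞})`-valued function: positive part minus negative part. -/
def eInt {X : Type*} [MeasurableSpace X] (μ : Measure X) (f : X → EReal) : EReal :=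
  ((∫⁻ x, (f x).toENNReal' ∂μ : ℝ≥0∞) : EReal) -
    ((∫⁻ x, (-(f x)).toENNReal' ∂μ : ℝ≥0∞) : EReal)

/-- The interaction energy `E[ρ] = (1/2) ∫∫ W (x - y) dρ(y) dρ(x)`. -/
def energy (d : ℕ) (W : EuclideanSpace ℝ (Fin d) → EReal)
    (ρ : Measure (EuclideanSpace ℝ (Fin d))) : EReal :=
  ((1/2 : ℝ) : EReal) * eInt (ρ.prod ρ) (fun p => W (p.1 - p.2))

/-- Condition (W0): locally integrable, bounded from below, lower semicontinuous, even. -/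
def W0 (d : ℕ) (W : EuclideanSpace ℝ (Fin d) → EReal) : Prop :=
  (∀ K : Set (EuclideanSpace ℝ (Fin d)), IsCompact K → ∫⁻ x in K, (W x).toENNReal' < ⊤) ∧
  (∃ M : ℝ, ∀ x, (M : EReal) ≤ W x) ∧
  LowerSemicontinuous W ∧ (∀ x, W (-x) = W x)

/-- A measure on `ℝ^d` is radially symmetric if it is invariant under every
origin-fixing rotation (linear isometry) of `ℝ^d`. -/
def RadiallySymmetric {d : ℕ} (ρ : Measure (EuclideanSpace ℝ (Fin d))) : Prop :=
  ∀ Q : EuclideanSpace ℝ (Fin d) ≃ₗᵢ[ℝ] EuclideanSpace ℝ (Fin d), Measure.map (⇑Q) ρ = ρ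

/-- `μ` is a minimizer of the interaction energy with potential `W` over probability
measures on `ℝ^d`. -/
def IsMinimizer (d : ℕ) (W : EuclideanSpace ℝ (Fin d) → EReal)
    (μ : Measure (EuclideanSpace ℝ (Fin d))) : Prop :=
  IsProbabilityMeasure μ ∧ ∀ ρ : Measure (EuclideanSpace ℝ (Fin d)),
    IsProbabilityMeasure ρ → energy d W μ ≤ energy d W ρ

/-- The prototype potential `W_ε`: equal to `-1` when `||x| - 1| ≤ ε` and `0` otherwise. -/
def Weps (d : ℕ) (ε : ℝ) (x : EuclideanSpace ℝ (Fin d)) : ℝ :=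
  if |‖x‖ - 1| ≤ ε then -1 else 0

/-! The equilateral triangle of side one with mass `1/3` at each vertex puts two thirds of the
mass of `ρ ⊗ ρ` on pairs at distance one, so a minimizer must do at least as well. For a
rotation-invariant `ν` on `ℂ = ℝ²`, rotating the second point by a uniform angle `θ` does not
change the mass of pairs at distance `≈ 1`, and the set of good angles is controlled pointwise:
since `|z - e^{iθ} w|²` is affine in `cos (θ - φ)` with slope `2|z||w|`, for `|z|, |w| ≥ r` the
good angles have measure at most `4√(2ε)/r`, while a point of modulus `< r` can only be paired with
a point of the shell `||w| - 1| ≤ ε + r`, which misses the ball. With `p` the mass of the ball and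
`q` that of the shell, the pairs at distance `≈ 1` have mass at most `2pq + c(1 - p)²`, with
`c = 2√(2ε)/(πr)`, and this is `< 2/3` as soon as `c < 1/2`; for `r = 5/11` that is the condition
`ε < (5π/(44√2))²`. -/

section NearUnitPairs

variable {E : Type*} [SeminormedAddCommGroup E] {ε : ℝ}

def nearUnitPairs (ε : ℝ) : Set (E × E) := {p | |‖p.1 - p.2‖ - 1| ≤ ε}

def shell (δ : ℝ) : Set E := {x | |‖x‖ - 1| ≤ δ}

lemma measurableSet_nearUnitPairs [MeasurableSpace E] [OpensMeasurableSpace (E × E)] (ε : ℝ) :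
    MeasurableSet (nearUnitPairs ε : Set (E × E)) :=
  (isClosed_le (by fun_prop : Continuous fun p : E × E => |‖p.1 - p.2‖ - 1|)
    continuous_const).measurableSet

lemma measurableSet_shell [MeasurableSpace E] [OpensMeasurableSpace E] (δ : ℝ) :
    MeasurableSet (shell δ : Set E) :=
  (isClosed_le (by fun_prop : Continuous fun x : E => |‖x‖ - 1|) continuous_const).measurableSet

lemma abs_norm_sub_one_le_of_mem_nearUnitPairs {x y : E} (h : (x, y) ∈ nearUnitPairs ε) :
    |‖x‖ - 1| ≤ ε + ‖y‖ := by
  have h₁ := abs_le.1 (show |‖x - y‖ - 1| ≤ ε from h)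
  have h₂ := abs_le.1 (by simpa using abs_norm_sub_norm_le x (x - y))
  exact abs_le.2 ⟨by linarith, by linarith⟩

lemma Isometry.prod_map_nearUnitPairs {F : Type*} [SeminormedAddCommGroup F] [MeasurableSpace E]
    [OpensMeasurableSpace E] [MeasurableSpace F] [BorelSpace F] [OpensMeasurableSpace (F × F)]
    {f : E → F} (hf : Isometry f) (μ : Measure E) [SFinite μ] (ε : ℝ) :
    ((μ.map f).prod (μ.map f)) (nearUnitPairs ε) = (μ.prod μ) (nearUnitPairs ε) := by
  have hfm : Measurable f := hf.continuous.measurable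
  rw [Measure.map_prod_map _ _ hfm hfm,
    Measure.map_apply (hfm.prodMap hfm) (measurableSet_nearUnitPairs ε)]
  congr 1
  ext p
  simp [nearUnitPairs, ← dist_eq_norm, hf.dist_eq]

lemma prod_nearUnitPairs_unitTriangle [MeasurableSpace E] [OpensMeasurableSpace (E × E)]
    (hε0 : 0 ≤ ε) (hε1 : ε < 1) (x : Fin 3 → E) (hx : Pairwise fun i j => ‖x i - x j‖ = 1) :
    (((3 : ℝ≥0∞)⁻¹ • ∑ i, Measure.dirac (x i)).prod ((3 : ℝ≥0∞)⁻¹ • ∑ i, Measure.dirac (x i)))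
      (nearUnitPairs ε) = 2 / 3 := by
  have hS := measurableSet_nearUnitPairs (E := E) ε
  have hmem (i j : Fin 3) : (x i, x j) ∈ nearUnitPairs ε ↔ i ≠ j := by
    by_cases hij : i = j
    · simp [nearUnitPairs, hij, abs_of_neg, hε1.not_ge]
    · simp [nearUnitPairs, hij, hx hij, hε0]
  have hind (i j : Fin 3) :
      (Prod.mk (x i) ⁻¹' nearUnitPairs ε).indicator 1 (x j) = if i = j then (0 : ℝ≥0∞) else 1 := by
    split_ifs with hij
    · exact indicator_of_notMem (show x j ∉ _ from fun h => (hmem i j).1 h hij) _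
    · exact indicator_of_mem (show x j ∈ _ from (hmem i j).2 hij) _
  rw [Measure.prod_apply hS, lintegral_smul_measure, lintegral_finsetSum_measure]
  simp only [lintegral_dirac' _ (measurable_measure_prodMk_left hS)]
  simp only [Measure.smul_apply, Measure.finsetSum_apply,
    Measure.dirac_apply' _ (measurable_prodMk_left hS)]
  simp +decide only [hind, Fin.sum_univ_three, smul_eq_mul, ↓reduceIte]
  calc _ = ((3 : ℝ≥0∞)⁻¹ * 3) * (2 / 3) := by rw [ENNReal.div_eq_inv_mul]; ring
    _ = 2 / 3 := by rw [ENNReal.inv_mul_cancel (by norm_num) (by norm_num), one_mul]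

end NearUnitPairs

lemma EReal.toENNReal'_coe (x : ℝ) : (x : EReal).toENNReal' = ENNReal.ofReal x := by
  simp [EReal.toENNReal']

lemma energy_Weps (d : ℕ) (ε : ℝ) (ρ : Measure (EuclideanSpace ℝ (Fin d))) [IsFiniteMeasure ρ] :
    energy d (fun x => ((Weps d ε x : ℝ) : EReal)) ρ
      = ((-(ρ.prod ρ).real (nearUnitPairs ε) / 2 : ℝ) : EReal) := by
  have hpos (x) : ENNReal.ofReal (Weps d ε x) = 0 := by unfold Weps; split_ifs <;> simp
  have hneg (p : EuclideanSpace ℝ (Fin d) × EuclideanSpace ℝ (Fin d)) :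
      ENNReal.ofReal (-Weps d ε (p.1 - p.2)) = (nearUnitPairs ε).indicator 1 p := by
    by_cases hp : p ∈ nearUnitPairs ε
    · simp [Weps, hp, show |‖p.1 - p.2‖ - 1| ≤ ε from hp]
    · simp [Weps, hp, show ¬|‖p.1 - p.2‖ - 1| ≤ ε from hp]
  simp only [energy, eInt, ← EReal.coe_neg, EReal.toENNReal'_coe, hpos, hneg, lintegral_zero,
    lintegral_indicator_one (measurableSet_nearUnitPairs ε),
    ← EReal.coe_ennreal_toReal (measure_ne_top _ _), ← measureReal_def]
  rw [EReal.coe_ennreal_zero, zero_sub, ← EReal.coe_neg, ← EReal.coe_mul]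
  ring_nf

lemma RadiallySymmetric.map_map_linearIsometryEquiv {d : ℕ}
    {μ : Measure (EuclideanSpace ℝ (Fin d))} (hμ : RadiallySymmetric μ) {F : Type*}
    [NormedAddCommGroup F] [NormedSpace ℝ F] [MeasurableSpace F] [BorelSpace F]
    (L : EuclideanSpace ℝ (Fin d) ≃ₗᵢ[ℝ] F) (R : F ≃ₗᵢ[ℝ] F) :
    (μ.map L).map R = μ.map L := by
  have hcomm : ⇑R ∘ ⇑L = ⇑L ∘ ⇑(L.trans (R.trans L.symm)) := by
    funext x
    simp
  rw [Measure.map_map R.continuous.measurable L.continuous.measurable, hcomm,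
    ← Measure.map_map L.continuous.measurable (LinearIsometryEquiv.continuous _).measurable, hμ]

lemma two_mul_mul_add_mul_sq_lt {p q c : ℝ} (hp : 0 ≤ p) (hpq : p + q ≤ 1) (hc : c < 1 / 2) :
    2 * (p * q) + c * (1 - p) ^ 2 < 2 / 3 := by
  -- with `t = 1 - p`, the left side is at most `2t - (2 - c)t² ≤ 1 / (2 - c)`
  nlinarith [mul_nonneg hp (by linarith : 0 ≤ 1 - p - q), sq_nonneg (1 - (2 - c) * (1 - p))]

section Trigonometry

open Real

lemma Real.arccos_sub_arccos_le {a b : ℝ} (ha : -1 ≤ a) (hab : a ≤ b) (hb : b ≤ 1) :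
    arccos a - arccos b ≤ arccos (1 - (b - a)) := by
  have h0 : 0 ≤ arccos a - arccos b := sub_nonneg.2 (arccos_le_arccos hab)
  have hπ : arccos a - arccos b ≤ π := by linarith [arccos_le_pi a, arccos_nonneg b]
  calc arccos a - arccos b = arccos (cos (arccos a - arccos b)) := (arccos_cos h0 hπ).symm
    _ ≤ arccos (1 - (b - a)) := by
      refine arccos_le_arccos ?_
      have hroot : (1 - b) * (1 + a) ≤ √((1 - a ^ 2) * (1 - b ^ 2)) :=
        le_sqrt_of_sq_le (by nlinarith [mul_nonneg (sub_nonneg.2 hb) (neg_le_iff_add_nonneg'.1 ha)])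
      rw [cos_sub, cos_arccos ha (hab.trans hb), cos_arccos (ha.trans hab) hb, sin_arccos,
        sin_arccos, ← sqrt_mul (by nlinarith)]
      nlinarith

lemma Real.arccos_one_sub_le_two_mul_sqrt {w : ℝ} (hw0 : 0 ≤ w) (hw : w ≤ π ^ 2 / 16) :
    arccos (1 - w) ≤ 2 * √w := by
  set u := √w
  have hu0 : 0 ≤ u := sqrt_nonneg w
  have hu2 : u ^ 2 = w := sq_sqrt hw0
  have hπ : π < 3.15 := pi_lt_d2
  have hu1 : u ^ 2 ≤ 0.63 := by nlinarith [pi_pos]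
  -- `sin u ≥ u - u³/6 ≥ u / √2` on `[0, π/4]`
  have hsin : u ^ 2 ≤ 2 * sin u ^ 2 := by
    rcases hu0.eq_or_lt with hu | hu
    · simp [← hu]
    have hlow : 0 ≤ u - u ^ 3 / 6 := by nlinarith
    have hsq : (u - u ^ 3 / 6) ^ 2 ≤ sin u ^ 2 := pow_le_pow_left₀ hlow (sin_gt_sub_cube hu).le 2
    nlinarith [mul_nonneg (sq_nonneg u) (sq_nonneg u)]
  have hcos : cos (2 * u) ≤ 1 - w := by rw [cos_two_mul, cos_sq']; linarith
  calc arccos (1 - w) ≤ arccos (cos (2 * u)) := arccos_le_arccos hcos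
    _ = 2 * u := arccos_cos (by positivity) (by nlinarith [pi_pos])

lemma Real.volume_cos_preimage_Icc_inter_Ioc_le {a b : ℝ} (hab : a ≤ b) :
    volume (cos ⁻¹' Icc a b ∩ Ioc 0 (2 * π)) ≤ ENNReal.ofReal (2 * (arccos a - arccos b)) := by
  have hsub : cos ⁻¹' Icc a b ∩ Ioc 0 (2 * π) ⊆
      Icc (arccos b) (arccos a) ∪ Icc (2 * π - arccos a) (2 * π - arccos b) := by
    rintro θ ⟨⟨hθa, hθb⟩, hθ0, hθ2π⟩
    rcases le_or_gt θ π with hθπ | hπθ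
    · have h := arccos_cos hθ0.le hθπ
      exact .inl ⟨h ▸ arccos_le_arccos hθb, h ▸ arccos_le_arccos hθa⟩
    · have h := arccos_cos (x := 2 * π - θ) (by linarith) (by linarith)
      rw [cos_two_pi_sub] at h
      exact .inr ⟨by linarith [h ▸ arccos_le_arccos hθa], by linarith [h ▸ arccos_le_arccos hθb]⟩
  calc volume (cos ⁻¹' Icc a b ∩ Ioc 0 (2 * π))
      ≤ volume (Icc (arccos b) (arccos a)) + volume (Icc (2 * π - arccos a) (2 * π - arccos b)) :=
        (measure_mono hsub).trans (measure_union_le _ _)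
    _ = ENNReal.ofReal (2 * (arccos a - arccos b)) := by
        rw [volume_Icc, volume_Icc, ← ENNReal.ofReal_add (sub_nonneg.2 (arccos_le_arccos hab))
          (by linarith [arccos_le_arccos hab])]
        ring_nf

lemma Real.volume_cos_preimage_Icc_inter_Ioc_le_sqrt (t : ℝ) {a b : ℝ} (h : b - a ≤ π ^ 2 / 16) :
    volume (cos ⁻¹' Icc a b ∩ Ioc t (t + 2 * π)) ≤ ENNReal.ofReal (4 * √(b - a)) := by
  have hperiodic : ∀ g : AddSubgroup.zmultiples (2 * π),
      (fun x => g +ᵥ x) ⁻¹' (cos ⁻¹' Icc a b) = cos ⁻¹' Icc a b := by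
    rintro ⟨_, n, rfl⟩
    ext x
    simp [vadd_eq_add, add_comm _ x, cos_add_int_mul_two_pi]
  have hshift := (isAddFundamentalDomain_Ioc two_pi_pos t).measure_set_eq
    (isAddFundamentalDomain_Ioc two_pi_pos 0)
    (measurableSet_Icc.preimage continuous_cos.measurable) hperiodic
  rw [hshift, zero_add]
  set a' := max a (-1)
  set b' := min b 1
  have hclamp : cos ⁻¹' Icc a b = cos ⁻¹' Icc a' b' := by
    ext θ
    simp [a', b', neg_one_le_cos, cos_le_one]
  rw [hclamp]
  rcases lt_or_ge b' a' with hba | hab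
  · simp [Icc_eq_empty_of_lt hba]
  have hw : b' - a' ≤ b - a := by linarith [le_max_left a (-1), min_le_left b 1]
  refine (volume_cos_preimage_Icc_inter_Ioc_le hab).trans (ENNReal.ofReal_le_ofReal ?_)
  calc 2 * (arccos a' - arccos b') ≤ 2 * arccos (1 - (b' - a')) := by
        gcongr; exact arccos_sub_arccos_le (le_max_right _ _) hab (min_le_right _ _)
    _ ≤ 2 * (2 * √(b' - a')) := by
        gcongr; exact arccos_one_sub_le_two_mul_sqrt (by linarith) (hw.trans h)
    _ ≤ 4 * √(b - a) := by linarith [sqrt_le_sqrt hw]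

end Trigonometry

section ComplexPlane

open Complex ComplexConjugate
open scoped Real

variable {ε r : ℝ}

lemma Complex.norm_sub_exp_mul_sq (z w : ℂ) (θ : ℝ) :
    ‖z - exp (θ * I) * w‖ ^ 2
      = ‖z‖ ^ 2 + ‖w‖ ^ 2 - 2 * (‖z‖ * ‖w‖) * Real.cos (θ - arg (z * conj w)) := by
  set ζ := z * conj w
  have hre : (z * conj (exp (θ * I) * w)).re = ‖ζ‖ * Real.cos (θ - arg ζ) := by
    rw [show z * conj (exp (θ * I) * w) = ζ * conj (exp (θ * I)) by rw [map_mul]; ring,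
      mul_re, conj_re, conj_im, exp_ofReal_mul_I_re, exp_ofReal_mul_I_im,
      ← norm_mul_cos_arg ζ, ← norm_mul_sin_arg ζ, Real.cos_sub]
    ring
  rw [Complex.sq_norm, Complex.sq_norm, Complex.sq_norm, normSq_sub, hre, normSq_mul,
    normSq_eq_norm_sq (exp _), norm_exp_ofReal_mul_I, norm_mul, norm_conj]
  ring

lemma Complex.volume_angles_nearUnitPairs_le (hε : ε ≤ 1) {z w : ℂ} (hz : z ≠ 0) (hw : w ≠ 0)
    (hsmall : 2 * ε / (‖z‖ * ‖w‖) ≤ π ^ 2 / 16) :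
    volume ({θ : ℝ | (z, exp (θ * I) * w) ∈ nearUnitPairs ε} ∩ Ioc 0 (2 * π))
      ≤ ENNReal.ofReal (4 * √(2 * ε / (‖z‖ * ‖w‖))) := by
  set φ := arg (z * conj w)
  have hrs : 0 < 2 * (‖z‖ * ‖w‖) := by positivity
  -- by `norm_sub_exp_mul_sq`, `|‖z - e^{iθ} w‖ - 1| ≤ ε` pins `cos (θ - φ)` to `[a, b]`
  set a := (‖z‖ ^ 2 + ‖w‖ ^ 2 - (1 + ε) ^ 2) / (2 * (‖z‖ * ‖w‖))
  set b := (‖z‖ ^ 2 + ‖w‖ ^ 2 - (1 - ε) ^ 2) / (2 * (‖z‖ * ‖w‖))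
  have hba : b - a = 2 * ε / (‖z‖ * ‖w‖) := by
    simp only [a, b]
    field_simp
    ring
  have hsub : {θ : ℝ | (z, exp (θ * I) * w) ∈ nearUnitPairs ε} ∩ Ioc 0 (2 * π)
      ⊆ (· + -φ) ⁻¹' (Real.cos ⁻¹' Icc a b ∩ Ioc (-φ) (-φ + 2 * π)) := by
    rintro θ ⟨hθ, hθ0, hθ2π⟩
    have hd := norm_sub_exp_mul_sq z w θ
    have hd0 := norm_nonneg (z - exp (θ * I) * w)
    obtain ⟨hlow, hup⟩ := abs_le.1 (show |‖z - exp (θ * I) * w‖ - 1| ≤ ε from hθ)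
    refine ⟨⟨?_, ?_⟩, by linarith, by linarith⟩
    · change a ≤ Real.cos (θ + -φ)
      rw [← sub_eq_add_neg, div_le_iff₀ hrs]
      nlinarith
    · change Real.cos (θ + -φ) ≤ b
      rw [← sub_eq_add_neg, le_div_iff₀ hrs]
      nlinarith
  calc _ ≤ volume (Real.cos ⁻¹' Icc a b ∩ Ioc (-φ) (-φ + 2 * π)) :=
        (measure_mono hsub).trans_eq (measure_preimage_add_right _ _ _)
    _ ≤ ENNReal.ofReal (4 * √(2 * ε / (‖z‖ * ‖w‖))) :=
        hba ▸ Real.volume_cos_preimage_Icc_inter_Ioc_le_sqrt _ (hba ▸ hsmall)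

lemma Complex.volume_angles_nearUnitPairs_le_of_le_norm (hr : 0 < r) (hε0 : 0 ≤ ε) (hε1 : ε ≤ 1)
    (hεr : 32 * ε ≤ (π * r) ^ 2) {z w : ℂ} (hz : r ≤ ‖z‖) (hw : r ≤ ‖w‖) :
    volume ({θ : ℝ | (z, exp (θ * I) * w) ∈ nearUnitPairs ε} ∩ Ioc 0 (2 * π))
      ≤ ENNReal.ofReal (2 * π) * ENNReal.ofReal (2 * √(2 * ε) / (π * r)) := by
  have hdiv : 2 * ε / (‖z‖ * ‖w‖) ≤ 2 * ε / r ^ 2 := by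
    gcongr
    nlinarith
  have hsqrt : √(2 * ε / r ^ 2) = √(2 * ε) / r := by
    rw [Real.sqrt_div' _ (sq_nonneg r), Real.sqrt_sq hr.le]
  refine (volume_angles_nearUnitPairs_le hε1 (norm_pos_iff.1 (hr.trans_le hz))
    (norm_pos_iff.1 (hr.trans_le hw)) (hdiv.trans ?_)).trans ?_
  · rw [div_le_iff₀ (by positivity)]
    linarith
  rw [← ENNReal.ofReal_mul Real.two_pi_pos.le]
  refine ENNReal.ofReal_le_ofReal ?_
  calc 4 * √(2 * ε / (‖z‖ * ‖w‖)) ≤ 4 * √(2 * ε / r ^ 2) := by gcongr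
    _ = 2 * π * (2 * √(2 * ε) / (π * r)) := by rw [hsqrt]; field_simp; ring

lemma lintegral_volume_angles_eq {ν : Measure ℂ} [SFinite ν]
    (hν : ∀ θ : ℝ, ν.map (fun z => exp (θ * I) * z) = ν) {S : Set (ℂ × ℂ)} (hS : MeasurableSet S) :
    ∫⁻ p, volume ({θ : ℝ | (p.1, exp (θ * I) * p.2) ∈ S} ∩ Ioc 0 (2 * π)) ∂(ν.prod ν)
      = ENNReal.ofReal (2 * π) * (ν.prod ν) S := by
  set M : Set (ℝ × (ℂ × ℂ)) := {q | (q.2.1, exp (q.1 * I) * q.2.2) ∈ S}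
  have hM : MeasurableSet M := hS.preimage (by fun_prop)
  have hslice (θ : ℝ) : (ν.prod ν) (Prod.mk θ ⁻¹' M) = (ν.prod ν) S := by
    have hrot : Measurable fun z : ℂ => exp (θ * I) * z := by fun_prop
    change (ν.prod ν) (Prod.map id (fun z => exp (θ * I) * z) ⁻¹' S) = _
    rw [← Measure.map_apply (measurable_id.prodMap hrot) hS,
      ← Measure.map_prod_map _ _ measurable_id hrot, Measure.map_id, hν θ]
  calc _ = ∫⁻ p, volume.restrict (Ioc 0 (2 * π)) ((fun θ => (θ, p)) ⁻¹' M) ∂(ν.prod ν) := by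
        simp_rw [Measure.restrict_apply' measurableSet_Ioc]
        rfl
    _ = ∫⁻ θ, (ν.prod ν) (Prod.mk θ ⁻¹' M) ∂(volume.restrict (Ioc 0 (2 * π))) := by
        rw [← Measure.prod_apply_symm hM, Measure.prod_apply hM]
    _ = ENNReal.ofReal (2 * π) * (ν.prod ν) S := by
        simp [hslice, Real.volume_Ioc, mul_comm]

def angleMajorant (ε r : ℝ) (p : ℂ × ℂ) : ℝ≥0∞ :=
  (ball 0 r ×ˢ shell (ε + r)).indicator 1 p + (shell (ε + r) ×ˢ ball 0 r).indicator 1 p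
    + ((ball 0 r)ᶜ ×ˢ (ball 0 r)ᶜ).indicator (fun _ => ENNReal.ofReal (2 * √(2 * ε) / (π * r))) p

lemma measurable_angleMajorant : Measurable (angleMajorant ε r) := by
  have hB : MeasurableSet (ball (0 : ℂ) r) := measurableSet_ball
  have hQ : MeasurableSet (shell (ε + r) : Set ℂ) := measurableSet_shell _
  unfold angleMajorant
  exact ((measurable_one.indicator (hB.prod hQ)).add (measurable_one.indicator (hQ.prod hB))).add
    (measurable_const.indicator (hB.compl.prod hB.compl))

lemma lintegral_angleMajorant (ν : Measure ℂ) [SFinite ν] :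
    ∫⁻ p, angleMajorant ε r p ∂(ν.prod ν)
      = 2 * (ν (ball 0 r) * ν (shell (ε + r)))
        + ENNReal.ofReal (2 * √(2 * ε) / (π * r)) * ν (ball 0 r)ᶜ ^ 2 := by
  have hB : MeasurableSet (ball (0 : ℂ) r) := measurableSet_ball
  have hQ : MeasurableSet (shell (ε + r) : Set ℂ) := measurableSet_shell _
  unfold angleMajorant
  rw [lintegral_add_right _ (measurable_const.indicator (hB.compl.prod hB.compl)),
    lintegral_add_right _ (measurable_one.indicator (hQ.prod hB)),
    lintegral_indicator_one (hB.prod hQ), lintegral_indicator_one (hQ.prod hB),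
    lintegral_indicator_const (hB.compl.prod hB.compl)]
  simp only [Measure.prod_prod]
  ring

lemma volume_angles_le_angleMajorant (hr : 0 < r) (hε0 : 0 ≤ ε) (hε1 : ε ≤ 1)
    (hεr : 32 * ε ≤ (π * r) ^ 2) (p : ℂ × ℂ) :
    volume ({θ : ℝ | (p.1, exp (θ * I) * p.2) ∈ nearUnitPairs ε} ∩ Ioc 0 (2 * π))
      ≤ ENNReal.ofReal (2 * π) * angleMajorant ε r p := by
  obtain ⟨z, w⟩ := p
  set A := {θ : ℝ | (z, exp (θ * I) * w) ∈ nearUnitPairs ε}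
  rcases A.eq_empty_or_nonempty with hA | ⟨θ, hθ⟩
  · simp [hA]
  have hθ' : |‖z - exp (θ * I) * w‖ - 1| ≤ ε := hθ
  have hnorm : ‖exp (θ * I) * w‖ = ‖w‖ := by rw [norm_mul, norm_exp_ofReal_mul_I, one_mul]
  have hfull : volume (A ∩ Ioc 0 (2 * π)) ≤ ENNReal.ofReal (2 * π) := by
    simpa using measure_mono (μ := volume) (inter_subset_right (s := A) (t := Ioc 0 (2 * π)))
  by_cases hz : z ∈ ball 0 r
  · have hw : w ∈ shell (ε + r) := by
      have := abs_norm_sub_one_le_of_mem_nearUnitPairs (ε := ε) (x := exp (θ * I) * w) (y := z)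
        (show |‖_ - z‖ - 1| ≤ ε by rw [norm_sub_rev]; exact hθ')
      show |‖w‖ - 1| ≤ ε + r
      rw [← hnorm]
      linarith [mem_ball_zero_iff.1 hz]
    refine hfull.trans (le_mul_of_one_le_right' ?_)
    rw [angleMajorant, indicator_of_mem (mk_mem_prod hz hw)]
    exact le_add_right (le_add_right le_rfl)
  by_cases hw : w ∈ ball 0 r
  · have hz' : z ∈ shell (ε + r) := by
      have := abs_norm_sub_one_le_of_mem_nearUnitPairs hθ
      show |‖z‖ - 1| ≤ ε + r
      linarith [mem_ball_zero_iff.1 hw]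
    refine hfull.trans (le_mul_of_one_le_right' ?_)
    rw [angleMajorant, indicator_of_mem (mk_mem_prod hz' hw)]
    exact le_add_right (le_add_left le_rfl)
  calc volume (A ∩ Ioc 0 (2 * π))
      ≤ ENNReal.ofReal (2 * π) * ENNReal.ofReal (2 * √(2 * ε) / (π * r)) :=
        volume_angles_nearUnitPairs_le_of_le_norm hr hε0 hε1 hεr (by simpa using hz)
          (by simpa using hw)
    _ ≤ ENNReal.ofReal (2 * π) * angleMajorant ε r (z, w) := by
        rw [angleMajorant, indicator_of_mem (mk_mem_prod (mem_compl hz) (mem_compl hw))]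
        exact mul_le_mul_right le_add_self _

lemma measureReal_prod_nearUnitPairs_le_of_rotation_invariant {ν : Measure ℂ}
    [IsProbabilityMeasure ν] (hν : ∀ θ : ℝ, ν.map (fun z => exp (θ * I) * z) = ν) (hr : 0 < r)
    (hε0 : 0 ≤ ε) (hε1 : ε ≤ 1) (hεr : 32 * ε ≤ (π * r) ^ 2) :
    (ν.prod ν).real (nearUnitPairs ε) ≤ 2 * (ν.real (ball 0 r) * ν.real (shell (ε + r)))
      + 2 * √(2 * ε) / (π * r) * (1 - ν.real (ball 0 r)) ^ 2 := by
  have hbound : (ν.prod ν) (nearUnitPairs ε) ≤ 2 * (ν (ball 0 r) * ν (shell (ε + r)))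
      + ENNReal.ofReal (2 * √(2 * ε) / (π * r)) * ν (ball 0 r)ᶜ ^ 2 := by
    refine (ENNReal.mul_le_mul_iff_right (ENNReal.ofReal_pos.2 Real.two_pi_pos).ne'
      ENNReal.ofReal_ne_top).1 ?_
    rw [← lintegral_volume_angles_eq hν (measurableSet_nearUnitPairs ε), ← lintegral_angleMajorant,
      ← lintegral_const_mul _ measurable_angleMajorant]
    exact lintegral_mono (volume_angles_le_angleMajorant hr hε0 hε1 hεr)
  rw [← probReal_compl_eq_one_sub measurableSet_ball]
  refine ENNReal.toReal_le_of_le_ofReal (by positivity) (hbound.trans_eq ?_)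
  rw [ENNReal.ofReal_add (by positivity) (by positivity), ENNReal.ofReal_mul (by norm_num),
    ENNReal.ofReal_mul measureReal_nonneg, ENNReal.ofReal_mul (by positivity),
    ENNReal.ofReal_pow measureReal_nonneg, ofReal_measureReal, ofReal_measureReal,
    ofReal_measureReal, ENNReal.ofReal_ofNat]

theorem measureReal_prod_nearUnitPairs_lt_of_rotation_invariant {ν : Measure ℂ}
    [IsProbabilityMeasure ν] (hν : ∀ θ : ℝ, ν.map (fun z => exp (θ * I) * z) = ν) (hr : 0 < r)
    (hε0 : 0 ≤ ε) (hεr : ε + 2 * r < 1) (hε : 32 * ε < (π * r) ^ 2) :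
    (ν.prod ν).real (nearUnitPairs ε) < 2 / 3 := by
  have hdisj : Disjoint (ball (0 : ℂ) r) (shell (ε + r)) := by
    refine disjoint_left.2 fun z hzB hzQ => ?_
    have := (abs_le.1 (show |‖z‖ - 1| ≤ ε + r from hzQ)).1
    linarith [mem_ball_zero_iff.1 hzB]
  have hsum : ν.real (ball 0 r) + ν.real (shell (ε + r)) ≤ 1 := by
    rw [← measureReal_union hdisj (measurableSet_shell _)]
    exact measureReal_le_one
  have hc : 2 * √(2 * ε) / (π * r) < 1 / 2 := by
    have h := Real.sqrt_lt_sqrt (by positivity) hε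
    rw [Real.sqrt_sq (by positivity), show 32 * ε = 4 ^ 2 * (2 * ε) by ring,
      Real.sqrt_mul (by norm_num), Real.sqrt_sq (by norm_num)] at h
    rw [div_lt_iff₀ (by positivity)]
    linarith
  exact (measureReal_prod_nearUnitPairs_le_of_rotation_invariant hν hr hε0 (by linarith) hε.le
    ).trans_lt (two_mul_mul_add_mul_sq_lt measureReal_nonneg hsum hc)

lemma Complex.norm_one_sub_exp_pi_div_three : ‖1 - exp (π / 3 * I)‖ = 1 := by
  have h := norm_sub_exp_mul_sq 1 1 (π / 3)
  simp only [map_one, mul_one, norm_one, arg_one, sub_zero, Real.cos_pi_div_three] at h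
  push_cast at h
  exact (pow_left_inj₀ (norm_nonneg _) zero_le_one two_ne_zero).1 (by linarith)

lemma RadiallySymmetric.measureReal_prod_nearUnitPairs_lt {μ : Measure (EuclideanSpace ℝ (Fin 2))}
    [IsProbabilityMeasure μ] (hμ : RadiallySymmetric μ) (hr : 0 < r) (hε0 : 0 ≤ ε)
    (hεr : ε + 2 * r < 1) (hε : 32 * ε < (π * r) ^ 2) :
    (μ.prod μ).real (nearUnitPairs ε) < 2 / 3 := by
  let e : EuclideanSpace ℝ (Fin 2) ≃ₗᵢ[ℝ] ℂ := Complex.orthonormalBasisOneI.repr.symm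
  have : IsProbabilityMeasure (μ.map e) :=
    Measure.isProbabilityMeasure_map e.continuous.measurable.aemeasurable
  have := measureReal_prod_nearUnitPairs_lt_of_rotation_invariant (ν := μ.map e)
    (fun θ => hμ.map_map_linearIsometryEquiv e (rotation (Circle.exp θ))) hr hε0 hεr hε
  rwa [measureReal_def, e.isometry.prod_map_nearUnitPairs, ← measureReal_def] at this

lemma exists_isProbabilityMeasure_measureReal_prod_nearUnitPairs_eq (hε0 : 0 ≤ ε) (hε1 : ε < 1) :
    ∃ ρ : Measure (EuclideanSpace ℝ (Fin 2)),
      IsProbabilityMeasure ρ ∧ (ρ.prod ρ).real (nearUnitPairs ε) = 2 / 3 := by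
  let e : ℂ ≃ₗᵢ[ℝ] EuclideanSpace ℝ (Fin 2) := Complex.orthonormalBasisOneI.repr
  let x : Fin 3 → EuclideanSpace ℝ (Fin 2) := e ∘ ![0, 1, exp (π / 3 * I)]
  have hx : Pairwise fun i j => ‖x i - x j‖ = 1 := by
    intro i j hij
    change ‖e _ - e _‖ = 1
    rw [← map_sub, LinearIsometryEquiv.norm_map]
    fin_cases i <;> fin_cases j <;>
      simp_all [norm_sub_rev _ (1 : ℂ), norm_one_sub_exp_pi_div_three, Complex.norm_exp]
  refine ⟨(3 : ℝ≥0∞)⁻¹ • ∑ i, Measure.dirac (x i), ⟨by simp [ENNReal.inv_mul_cancel]⟩, ?_⟩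
  rw [measureReal_def, prod_nearUnitPairs_unitTriangle hε0 hε1 x hx]
  norm_num

end ComplexPlane

/-- In dimension 2, for every `0 < ε < (5π/(44√2))²`, no minimizer of `E_ε` is radially
symmetric. -/
theorem symmetry_breaking_dim_two (ε : ℝ) (hε0 : 0 < ε)
    (hε : ε < (5 * Real.pi / (44 * Real.sqrt 2))^2) :
    ∀ μ : Measure (EuclideanSpace ℝ (Fin 2)),
      IsMinimizer 2 (fun x => ((Weps 2 ε x : ℝ) : EReal)) μ → ¬ RadiallySymmetric μ := by
  rintro μ ⟨hμ, hmin⟩ hrad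
  have hε' : 32 * ε < (Real.pi * (5 / 11)) ^ 2 := by
    rw [div_pow, mul_pow, mul_pow, Real.sq_sqrt zero_le_two] at hε
    linarith
  have hε1 : ε < 1 / 11 := by nlinarith [Real.pi_lt_d2, Real.pi_pos]
  obtain ⟨ρ, hρ, htriangle⟩ :=
    exists_isProbabilityMeasure_measureReal_prod_nearUnitPairs_eq hε0.le (by linarith)
  have hradial := hrad.measureReal_prod_nearUnitPairs_lt (by norm_num) hε0.le (by linarith) hε'
  have hmin_le := hmin ρ hρ
  rw [energy_Weps, energy_Weps, EReal.coe_le_coe_iff, htriangle] at hmin_le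
  linarith
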